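/- arXiv:2203.00400 — 3 statements merged into one kernel-verified Lean document; each statement's English description precedes it below -/
import Mathlib

section
/- Fix θ ∈ ℂ^M and set Θ = diagonal(θ). The function W ↦ J(W, θ) is ℝ-Fréchet differentiable at every W ≠ 0, and its conjugate Wirtinger gradient at W equals G_W = (2W/‖W‖_F²)·[ tr(Γ² f ȳ^T) − ‖Γ ȳ‖₂² ] + (2 M² N_BS / ‖W‖_F²) · B_G · ( I ∘ [ A_G^H Θ^H Ã^H Γ² Diag(ȳ − f) Ã Θ A_G ] ) · Λ B_G^H W, where ȳ = ȳ(W, θ); that is, for every direction Δ ∈ ℂ^{N_BS×N_d}, the Fréchet derivative of J(·, θ) at W in direction Δ equals 2 Re tr(Δ^H G_W). -/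
/-!
Write `c = M² N_BS`, `C = Ã Θ A_G` and `e_j` for the `j`-th basis vector. Since `I ∘ X` is diagonal,
`(C (I ∘ X) Cᴴ)_jj = tr((I ∘ Cᴴ Diag(e_j) C) X)`, and cyclicity of the trace turns the `j`-th
pattern entry into `ȳ_j = c · Re tr(Wᴴ K_j W) / Re tr(Wᴴ W)` with the Hermitian kernel
`K(v) = B_G (I ∘ Cᴴ Diag(v) C) Λ B_Gᴴ` at `v = e_j`. A symmetric bilinear form `β` has derivative
`2 β(W, ·)` along the diagonal, so the quotient and chain rules express `dJ(Δ)` through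
`Re tr(Wᴴ Δ)` and `Re tr(Wᴴ K_j Δ)`; as `K` is linear in `v`, the weighted sum of the `K_j` with
weights `γ_j² (ȳ_j − f_j)` regroups into the kernel `B_G (I ∘ [Cᴴ Γ² Diag(ȳ − f) C]) Λ B_Gᴴ` of the
claimed gradient.
-/

open Matrix

attribute [local instance] Matrix.normedAddCommGroup Matrix.normedSpace

/-- Squared Frobenius norm of a complex matrix. -/
noncomputable def frobSq {m n : Type*} [Fintype m] [Fintype n]
    (W : Matrix m n ℂ) : ℝ :=
  ∑ i, ∑ j, Complex.normSq (W i j)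

/-- The normalized average power pattern
`ȳ(W,θ) = diag( (M² N_BS/‖W‖_F²) · Ã Θ A_G ( I ∘ (Λ B_Gᴴ W Wᴴ B_G) ) A_Gᴴ Θᴴ Ãᴴ )`
(the diagonal entries are real; we take their real parts). -/
noncomputable def ybar (M NBS Nd L κM : ℕ)
    (AG : Matrix (Fin M) (Fin L) ℂ) (BG : Matrix (Fin NBS) (Fin L) ℂ)
    (Atil : Matrix (Fin κM) (Fin M) ℂ) (Λ : Fin L → ℝ)
    (W : Matrix (Fin NBS) (Fin Nd) ℂ) (θ : Fin M → ℂ) : Fin κM → ℝ :=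
  fun j =>
    ((M : ℝ) ^ 2 * NBS / frobSq W) *
      ((Atil * Matrix.diagonal θ * AG *
          Matrix.hadamard 1
            (Matrix.diagonal (fun l => (Λ l : ℂ)) * BGᴴ * W * Wᴴ * BG) *
          AGᴴ * (Matrix.diagonal θ)ᴴ * Atilᴴ) j j).re

/-- The weighted pattern-synthesis cost `J(W,θ) = ‖Γ (f − ȳ(W,θ))‖₂²`, with
`Γ = Diag(γ)`. -/
noncomputable def costJ (M NBS Nd L κM : ℕ)
    (AG : Matrix (Fin M) (Fin L) ℂ) (BG : Matrix (Fin NBS) (Fin L) ℂ)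
    (Atil : Matrix (Fin κM) (Fin M) ℂ) (Λ : Fin L → ℝ)
    (γ : Fin κM → ℝ) (f : Fin κM → ℝ)
    (W : Matrix (Fin NBS) (Fin Nd) ℂ) (θ : Fin M → ℂ) : ℝ :=
  ∑ j, (γ j * (f j - ybar M NBS Nd L κM AG BG Atil Λ W θ j)) ^ 2

section Calculus

variable {E F : Type*} [NormedAddCommGroup E] [NormedSpace ℝ E] [NormedAddCommGroup F]
  [NormedSpace ℝ F] {x : E}

theorem ContinuousLinearMap.hasFDerivAt_apply_self_of_comm {B : E →L[ℝ] E →L[ℝ] F}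
    (hB : ∀ u v, B u v = B v u) : HasFDerivAt (fun y => B y y) (2 • B x) x := by
  refine (B.hasFDerivAt_of_bilinear (hasFDerivAt_id x) (hasFDerivAt_id x)).congr_fderiv ?_
  ext y
  simp [hB y x, two_smul]

theorem HasFDerivAt.const_div_mul {s q : E → ℝ} {s' q' : E →L[ℝ] ℝ} (c : ℝ)
    (hs : HasFDerivAt s s' x) (hq : HasFDerivAt q q' x) (hs0 : s x ≠ 0) :
    HasFDerivAt (fun y => c / s y * q y) ((s x)⁻¹ • (c • q' - (c / s x * q x) • s')) x := by
  have hinv := (hasDerivAt_inv hs0).comp_hasFDerivAt x hs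
  refine ((hinv.const_mul c).mul hq).congr_fderiv ?_
  ext y
  simp only [Function.comp_apply, neg_smul, smul_neg, _root_.add_apply, _root_.smul_apply,
    smul_eq_mul, _root_.neg_apply, _root_.sub_apply]
  field_simp
  ring

theorem hasFDerivAt_sum_sq_mul_sub {ι : Type*} [Fintype ι] (γ f : ι → ℝ) {y : ι → E → ℝ}
    {y' : ι → E →L[ℝ] ℝ} (hy : ∀ j, HasFDerivAt (y j) (y' j) x) :
    HasFDerivAt (fun z => ∑ j, (γ j * (f j - y j z)) ^ 2)
      (∑ j, (2 * γ j ^ 2 * (y j x - f j)) • y' j) x := by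
  refine (HasFDerivAt.fun_sum fun j _ =>
    (((hy j).const_sub (f j)).const_mul (γ j)).pow 2).congr_fderiv ?_
  ext z
  simp only [FunLike.coe_sum, Finset.sum_apply]
  refine Finset.sum_congr rfl fun j _ => ?_
  simp only [Nat.add_one_sub_one, pow_one, nsmul_eq_mul, Nat.cast_ofNat, smul_neg,
    _root_.neg_apply, _root_.smul_apply, smul_eq_mul]
  ring

theorem exists_hasFDerivAt_sum_sq_sub_div_mul {ι : Type*} [Fintype ι]
    {S : E →L[ℝ] E →L[ℝ] ℝ} {B : ι → E →L[ℝ] E →L[ℝ] ℝ} (hS : ∀ u v, S u v = S v u)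
    (hB : ∀ j u v, B j u v = B j v u) (c : ℝ) (γ f : ι → ℝ) (hx : S x x ≠ 0) :
    ∃ D : E →L[ℝ] ℝ, HasFDerivAt (fun z => ∑ j, (γ j * (f j - c / S z z * B j z z)) ^ 2) D x ∧
      ∀ Δ, D Δ = 2 * (2 / S x x * (∑ j, γ j ^ 2 * f j * (c / S x x * B j x x) -
          ∑ j, γ j ^ 2 * (c / S x x * B j x x) ^ 2) * S x Δ +
        2 * c / S x x * ∑ j, γ j ^ 2 * (c / S x x * B j x x - f j) * B j x Δ) := by
  refine ⟨_, hasFDerivAt_sum_sq_mul_sub γ f fun j =>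
    (S.hasFDerivAt_apply_self_of_comm hS).const_div_mul c
      ((B j).hasFDerivAt_apply_self_of_comm (hB j)) hx, fun Δ => ?_⟩
  simp only [FunLike.coe_sum, Finset.sum_apply, _root_.smul_apply, _root_.sub_apply, smul_eq_mul]
  simp only [← Finset.sum_sub_distrib, Finset.mul_sum, Finset.sum_mul, ← Finset.sum_add_distrib]
  refine Finset.sum_congr rfl fun j _ => ?_
  field_simp
  ring

end Calculus

namespace Matrix

variable {l m n : Type*} [Fintype m] [Fintype n]

/- Stated as `IsBoundedBilinearMap` rather than as a continuous bilinear map on `Matrix m n ℂ`: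
`toContinuousLinearMap` then yields forms whose types carry the normed-space instances used by
`HasFDerivAt`, not the product-topology instances found by instance search on matrices. -/
theorem isBoundedBilinearMap_re_trace (K : Matrix m m ℂ) :
    IsBoundedBilinearMap ℝ fun p : Matrix m n ℂ × Matrix m n ℂ => (trace (p.1ᴴ * K * p.2)).re :=
  (LinearMap.mk₂ ℝ (fun X Y : Matrix m n ℂ => (trace (Xᴴ * K * Y)).re)
    (fun X X' Y => by simp [Matrix.add_mul])
    (fun r X Y => by simp)
    (fun X Y Y' => by simp [Matrix.mul_add])
    (fun r X Y => by simp)).toContinuousBilinearMap.isBoundedBilinearMap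

theorem re_trace_conjTranspose_mul_mul_comm {K : Matrix m m ℂ} (hK : K.IsHermitian)
    (X Y : Matrix m n ℂ) : (trace (Xᴴ * K * Y)).re = (trace (Yᴴ * K * X)).re := by
  rw [← Complex.conj_re, ← Complex.star_def, ← trace_conjTranspose]
  simp [conjTranspose_mul, hK.eq, Matrix.mul_assoc]

theorem isBoundedBilinearMap_re_trace_conjTranspose_mul :
    IsBoundedBilinearMap ℝ fun p : Matrix m n ℂ × Matrix m n ℂ => (trace (p.1ᴴ * p.2)).re := by
  classical
  simpa using isBoundedBilinearMap_re_trace (n := n) (1 : Matrix m m ℂ)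

theorem re_trace_conjTranspose_mul_comm (X Y : Matrix m n ℂ) :
    (trace (Xᴴ * Y)).re = (trace (Yᴴ * X)).re := by
  classical
  simpa using re_trace_conjTranspose_mul_mul_comm (isHermitian_one (n := m) (α := ℂ)) X Y

theorem trace_mul_one_hadamard {α : Type*} [Fintype l] [DecidableEq l] [CommSemiring α]
    (A X : Matrix l l α) : trace (A * hadamard 1 X) = trace (hadamard 1 A * X) := by
  simp [one_hadamard, trace, mul_diagonal, diagonal_mul]

end Matrix

section Frobenius

variable {m n : Type*} [Fintype m] [Fintype n]

theorem frobSq_eq_re_trace (W : Matrix m n ℂ) : frobSq W = (trace (Wᴴ * W)).re := by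
  simp only [frobSq, trace, diag, mul_apply, conjTranspose_apply, Complex.re_sum]
  rw [Finset.sum_comm]
  simp [Complex.normSq_apply, Complex.mul_re]

theorem frobSq_ne_zero {W : Matrix m n ℂ} (hW : W ≠ 0) : frobSq W ≠ 0 := by
  obtain ⟨i, j, hij⟩ : ∃ i j, W i j ≠ 0 := by
    by_contra! h
    exact hW (Matrix.ext h)
  refine (lt_of_lt_of_le (Complex.normSq_pos.2 hij) ?_).ne'
  calc Complex.normSq (W i j) ≤ ∑ j', Complex.normSq (W i j') :=
        Finset.single_le_sum (fun _ _ => Complex.normSq_nonneg _) (Finset.mem_univ j)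
    _ ≤ frobSq W :=
        Finset.single_le_sum (f := fun i => ∑ j', Complex.normSq (W i j'))
          (fun _ _ => Finset.sum_nonneg fun _ _ => Complex.normSq_nonneg _) (Finset.mem_univ i)

end Frobenius

section PatternKernel

variable {k l m n : Type*} [Fintype k] [Fintype l] [DecidableEq k] [DecidableEq l]

noncomputable def patternKernel (B : Matrix m l ℂ) (C : Matrix k l ℂ) (Λ : l → ℝ) :
    (k → ℝ) →ₗ[ℝ] Matrix m m ℂ where
  toFun v := B * hadamard 1 (Cᴴ * diagonal (fun j => (v j : ℂ)) * C) *
    diagonal (fun i => (Λ i : ℂ)) * Bᴴ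
  map_add' v w := by
    simp [← diagonal_add, Matrix.add_mul, Matrix.mul_add, hadamard_add]
  map_smul' r v := by
    have hdiag : diagonal (fun j => ((r • v) j : ℂ)) = r • diagonal (fun j => (v j : ℂ)) := by
      ext i j
      by_cases h : i = j <;> simp [h]
    simp only [RingHom.id_apply, hdiag, Matrix.mul_smul, Matrix.smul_mul, hadamard_smul]

theorem patternKernel_apply (B : Matrix m l ℂ) (C : Matrix k l ℂ) (Λ : l → ℝ) (v : k → ℝ) :
    patternKernel B C Λ v = B * hadamard 1 (Cᴴ * diagonal (fun j => (v j : ℂ)) * C) *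
      diagonal (fun i => (Λ i : ℂ)) * Bᴴ :=
  rfl

theorem patternKernel_isHermitian (B : Matrix m l ℂ) (C : Matrix k l ℂ) (Λ : l → ℝ)
    (v : k → ℝ) : (patternKernel B C Λ v).IsHermitian := by
  set Y := Cᴴ * diagonal (fun j => (v j : ℂ)) * C
  have hY : Y.IsHermitian :=
    isHermitian_conjTranspose_mul_mul C (isHermitian_diagonal_of_self_adjoint _ (by ext; simp))
  have hD : (diagonal (fun i => Y i i * Λ i)).IsHermitian :=
    isHermitian_diagonal_of_self_adjoint _ (by ext i; simp [hY.apply i i])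
  rw [patternKernel_apply, one_hadamard, Matrix.mul_assoc B, diagonal_mul_diagonal]
  exact isHermitian_mul_mul_conjTranspose B hD

theorem trace_conjTranspose_mul_patternKernel_mul [Fintype m] [Fintype n] (B : Matrix m l ℂ)
    (C : Matrix k l ℂ) (Λ : l → ℝ) (W : Matrix m n ℂ) (j : k) :
    trace (Wᴴ * patternKernel B C Λ (fun j' => if j = j' then 1 else 0) * W) =
      (C * hadamard 1 (diagonal (fun i => (Λ i : ℂ)) * Bᴴ * W * Wᴴ * B) * Cᴴ) j j := by
  set X := diagonal (fun i => (Λ i : ℂ)) * Bᴴ * W * Wᴴ * B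
  set e : k → ℂ := fun j' => if j = j' then 1 else 0
  have he : (fun j' => ((if j = j' then 1 else 0 : ℝ) : ℂ)) = e := by
    ext j'; split_ifs <;> simp [e, *]
  calc trace (Wᴴ * patternKernel B C Λ (fun j' => if j = j' then 1 else 0) * W)
      = trace (hadamard 1 (Cᴴ * diagonal e * C) * X) := by
        rw [patternKernel_apply, he]
        simp only [X, Matrix.mul_assoc]
        rw [trace_mul_comm]
        simp only [Matrix.mul_assoc]
        rw [trace_mul_comm]
        simp only [Matrix.mul_assoc]
    _ = trace (Cᴴ * diagonal e * C * hadamard 1 X) := (trace_mul_one_hadamard _ _).symm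
    _ = trace (diagonal e * (C * hadamard 1 X * Cᴴ)) := by
        simp only [Matrix.mul_assoc]
        rw [trace_mul_comm]
        simp only [Matrix.mul_assoc]
    _ = (C * hadamard 1 X * Cᴴ) j j := by
        simp [trace, diagonal_mul, e]

theorem re_trace_conjTranspose_mul_patternKernel_mul [Fintype m] [Fintype n]
    (B : Matrix m l ℂ) (C : Matrix k l ℂ) (Λ : l → ℝ) (v : k → ℝ) (Δ W : Matrix m n ℂ) :
    (trace (Δᴴ * (patternKernel B C Λ v * W))).re = ∑ j, v j *
      (trace (Wᴴ * patternKernel B C Λ (fun j' => if j = j' then 1 else 0) * Δ)).re := by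
  rw [LinearMap.pi_apply_eq_sum_univ (patternKernel B C Λ) v]
  simp only [Matrix.sum_mul, Matrix.mul_sum, Matrix.smul_mul, Matrix.mul_smul, trace_sum,
    trace_smul, Complex.re_sum, Complex.smul_re, smul_eq_mul]
  refine Finset.sum_congr rfl fun j _ => ?_
  rw [← Matrix.mul_assoc, re_trace_conjTranspose_mul_mul_comm (patternKernel_isHermitian B C Λ _)]

theorem re_trace_conjTranspose_mul_gradient {p : Type*} [Fintype p] [DecidableEq p] [Fintype m]
    [Fintype n] (A : Matrix k p ℂ) (θ : p → ℂ) (G : Matrix p l ℂ) (B : Matrix m l ℂ) (Λ : l → ℝ)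
    (γ g : k → ℝ) (a b : ℝ) (Δ W : Matrix m n ℂ) :
    (trace (Δᴴ * (a • W + b • (B * hadamard 1 (Gᴴ * (diagonal θ)ᴴ * Aᴴ *
      diagonal (fun j => ((γ j) ^ 2 : ℂ)) * diagonal (fun j => ((g j : ℝ) : ℂ)) * A *
        diagonal θ * G) * diagonal (fun i => (Λ i : ℂ)) * Bᴴ * W)))).re =
      a * (trace (Wᴴ * Δ)).re + b * ∑ j, γ j ^ 2 * g j * (trace (Wᴴ * patternKernel B
        (A * diagonal θ * G) Λ (fun j' => if j = j' then 1 else 0) * Δ)).re := by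
  have hker : Gᴴ * (diagonal θ)ᴴ * Aᴴ * diagonal (fun j => ((γ j) ^ 2 : ℂ)) *
      diagonal (fun j => ((g j : ℝ) : ℂ)) * A * diagonal θ * G =
      (A * diagonal θ * G)ᴴ * diagonal (fun j => ((γ j ^ 2 * g j : ℝ) : ℂ)) *
        (A * diagonal θ * G) := by
    simp [conjTranspose_mul, Matrix.mul_assoc, diagonal_mul_diagonal]
  rw [hker, ← patternKernel_apply, Matrix.mul_add, Matrix.mul_smul, Matrix.mul_smul, trace_add,
    trace_smul, trace_smul, Complex.add_re, Complex.smul_re, Complex.smul_re, smul_eq_mul,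
    smul_eq_mul, re_trace_conjTranspose_mul_comm Δ, re_trace_conjTranspose_mul_patternKernel_mul]

end PatternKernel

section PatternSynthesis

variable {M NBS Nd L κM : ℕ} (AG : Matrix (Fin M) (Fin L) ℂ) (BG : Matrix (Fin NBS) (Fin L) ℂ)
  (Atil : Matrix (Fin κM) (Fin M) ℂ) (Λ : Fin L → ℝ) (θ : Fin M → ℂ)

theorem ybar_eq_re_trace (W : Matrix (Fin NBS) (Fin Nd) ℂ) (j : Fin κM) :
    ybar M NBS Nd L κM AG BG Atil Λ W θ j = (M : ℝ) ^ 2 * NBS / frobSq W *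
      (trace (Wᴴ * patternKernel BG (Atil * diagonal θ * AG) Λ
        (fun j' => if j = j' then 1 else 0) * W)).re := by
  rw [ybar, trace_conjTranspose_mul_patternKernel_mul]
  simp [conjTranspose_mul, Matrix.mul_assoc]

theorem costJ_eq_sum_re_trace (γ f : Fin κM → ℝ) (W : Matrix (Fin NBS) (Fin Nd) ℂ) :
    costJ M NBS Nd L κM AG BG Atil Λ γ f W θ = ∑ j, (γ j * (f j -
      (M : ℝ) ^ 2 * NBS / (trace (Wᴴ * W)).re * (trace (Wᴴ * patternKernel BG
        (Atil * diagonal θ * AG) Λ (fun j' => if j = j' then 1 else 0) * W)).re)) ^ 2 := by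
  simp only [costJ, ybar_eq_re_trace, frobSq_eq_re_trace]

end PatternSynthesis

theorem stmt1_general (M NBS Nd L κM : ℕ)
    (AG : Matrix (Fin M) (Fin L) ℂ) (BG : Matrix (Fin NBS) (Fin L) ℂ)
    (Atil : Matrix (Fin κM) (Fin M) ℂ) (Λ : Fin L → ℝ)
    (γ : Fin κM → ℝ) (f : Fin κM → ℝ)
    (θ : Fin M → ℂ)
    (W : Matrix (Fin NBS) (Fin Nd) ℂ) (hW : W ≠ 0) :
    ∃ D : Matrix (Fin NBS) (Fin Nd) ℂ →L[ℝ] ℝ,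
      HasFDerivAt (fun W' => costJ M NBS Nd L κM AG BG Atil Λ γ f W' θ) D W ∧
        ∀ Δ : Matrix (Fin NBS) (Fin Nd) ℂ,
          D Δ =
            2 * (Matrix.trace (Δᴴ *
              (((2 / frobSq W) *
                  ((∑ j, (γ j) ^ 2 * f j * ybar M NBS Nd L κM AG BG Atil Λ W θ j) -
                    ∑ j, (γ j) ^ 2 * (ybar M NBS Nd L κM AG BG Atil Λ W θ j) ^ 2)) • W +
                ((2 * (M : ℝ) ^ 2 * NBS / frobSq W) •
                  (BG *
                    Matrix.hadamard 1
                      (AGᴴ * (Matrix.diagonal θ)ᴴ * Atilᴴ *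
                        Matrix.diagonal (fun j => ((γ j) ^ 2 : ℂ)) *
                        Matrix.diagonal
                          (fun j => ((ybar M NBS Nd L κM AG BG Atil Λ W θ j - f j : ℝ) : ℂ)) *
                        Atil * Matrix.diagonal θ * AG) *
                    Matrix.diagonal (fun l => (Λ l : ℂ)) * BGᴴ * W))))).re := by
  set K : Fin κM → Matrix (Fin NBS) (Fin NBS) ℂ := fun j =>
    patternKernel BG (Atil * diagonal θ * AG) Λ (fun j' => if j = j' then 1 else 0)
  obtain ⟨D, hD, hDΔ⟩ := exists_hasFDerivAt_sum_sq_sub_div_mul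
    (S := isBoundedBilinearMap_re_trace_conjTranspose_mul.toContinuousLinearMap)
    (B := fun j => (isBoundedBilinearMap_re_trace (K j)).toContinuousLinearMap)
    re_trace_conjTranspose_mul_comm
    (fun j => re_trace_conjTranspose_mul_mul_comm (patternKernel_isHermitian _ _ _ _))
    ((M : ℝ) ^ 2 * NBS) γ f (frobSq_eq_re_trace W ▸ frobSq_ne_zero hW)
  simp only [IsBoundedBilinearMap.toContinuousLinearMap_apply] at hD hDΔ
  -- The statement's instances on matrices agree with the normed ones only up to unfolding, so the
  -- two goals are closed through definitional unification (`exact`, `trans`), not `simpa`/`rw`.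
  refine ⟨D, ?_, fun Δ => (hDΔ Δ).trans ?_⟩
  · simp only [costJ_eq_sum_re_trace]
    exact hD
  · rw [re_trace_conjTranspose_mul_gradient]
    simp only [← frobSq_eq_re_trace, K, ← ybar_eq_re_trace]
    ring

/-- For fixed `θ`, the map `W ↦ J(W,θ)` is ℝ-Fréchet differentiable at
every `W ≠ 0`, with conjugate Wirtinger gradient
`G_W = (2W/‖W‖_F²)[tr(Γ² f ȳᵀ) − ‖Γȳ‖₂²]
      + (2M²N_BS/‖W‖_F²) B_G (I ∘ [A_Gᴴ Θᴴ Ãᴴ Γ² Diag(ȳ−f) Ã Θ A_G]) Λ B_Gᴴ W`,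
i.e. the derivative in direction `Δ` equals `2 Re tr(Δᴴ G_W)`. -/
theorem stmt1 (M NBS Nd L κM : ℕ) (hM : 0 < M) (hNBS : 0 < NBS) (hNd : 0 < Nd)
    (hL : 0 < L) (hκM : 0 < κM)
    (AG : Matrix (Fin M) (Fin L) ℂ) (BG : Matrix (Fin NBS) (Fin L) ℂ)
    (Atil : Matrix (Fin κM) (Fin M) ℂ) (Λ : Fin L → ℝ) (hΛ : ∀ l, 0 ≤ Λ l)
    (γ : Fin κM → ℝ) (hγ : ∀ j, 0 ≤ γ j) (f : Fin κM → ℝ)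
    (θ : Fin M → ℂ)
    (W : Matrix (Fin NBS) (Fin Nd) ℂ) (hW : W ≠ 0) :
    ∃ D : Matrix (Fin NBS) (Fin Nd) ℂ →L[ℝ] ℝ,
      HasFDerivAt (fun W' => costJ M NBS Nd L κM AG BG Atil Λ γ f W' θ) D W ∧
        ∀ Δ : Matrix (Fin NBS) (Fin Nd) ℂ,
          D Δ =
            2 * (Matrix.trace (Δᴴ *
              (((2 / frobSq W) *
                  ((∑ j, (γ j) ^ 2 * f j * ybar M NBS Nd L κM AG BG Atil Λ W θ j) -
                    ∑ j, (γ j) ^ 2 * (ybar M NBS Nd L κM AG BG Atil Λ W θ j) ^ 2)) • W +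
                ((2 * (M : ℝ) ^ 2 * NBS / frobSq W) •
                  (BG *
                    Matrix.hadamard 1
                      (AGᴴ * (Matrix.diagonal θ)ᴴ * Atilᴴ *
                        Matrix.diagonal (fun j => ((γ j) ^ 2 : ℂ)) *
                        Matrix.diagonal
                          (fun j => ((ybar M NBS Nd L κM AG BG Atil Λ W θ j - f j : ℝ) : ℂ)) *
                        Atil * Matrix.diagonal θ * AG) *
                    Matrix.diagonal (fun l => (Λ l : ℂ)) * BGᴴ * W))))).re :=
  stmt1_general M NBS Nd L κM AG BG Atil Λ γ f θ W hW
end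

section
/- Let M be a positive integer, θ ∈ ℂ^M, and let φ, φ', φ₀, φ₁ be real angles satisfying cos φ' = cos φ + cos φ₀ − cos φ₁. Then Σ_{m=0}^{M−1} e^{−jπ m cos φ'} θ_m e^{−jπ m cos φ₁} = Σ_{m=0}^{M−1} e^{−jπ m cos φ} θ_m e^{−jπ m cos φ₀}. Consequently, for the reflected power pattern y_L(φ; ψ) = N_BS M² | a_H(φ)^H Θ a_G(ψ) |² with Θ = diagonal(θ), one has y_L(φ'; φ₁) = y_L(φ; φ₀): changing the angle of arrival of the impinging signal from φ₀ to φ₁ shifts the reflected pattern so that the power reflected towards φ under incidence φ₀ is reflected towards φ' under incidence φ₁. -/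
open Complex Finset

/-- Array response vector at the RIS corresponding to signal departure:
`a_H(φ)_m = (1/√M) e^{jπ m cos φ}`. -/
noncomputable def aH (M : ℕ) (φ : ℝ) : Fin M → ℂ :=
  fun m => (1 / Real.sqrt M) * Complex.exp ((Real.pi * m * Real.cos φ : ℝ) * Complex.I)

/-- Array response vector at the RIS corresponding to signal arrival:
`a_G(φ)_m = (1/√M) e^{−jπ m cos φ}`. -/
noncomputable def aG (M : ℕ) (φ : ℝ) : Fin M → ℂ :=
  fun m => (1 / Real.sqrt M) * Complex.exp (-(Real.pi * m * Real.cos φ : ℝ) * Complex.I)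

/-- Reflected power pattern `y_L(φ; ψ) = N_BS M² |a_H(φ)ᴴ Θ a_G(ψ)|²` with
`Θ = diagonal θ`. -/
noncomputable def yL (M NBS : ℕ) (θ : Fin M → ℂ) (φ ψ : ℝ) : ℝ :=
  (NBS : ℝ) * (M : ℝ) ^ 2 *
    Complex.normSq (∑ m : Fin M,
      (starRingEnd ℂ) (aH M φ m) * θ m * aG M ψ m)

/-- If `cos φ' = cos φ + cos φ₀ − cos φ₁`, then
`∑_m e^{−jπ m cos φ'} θ_m e^{−jπ m cos φ₁} = ∑_m e^{−jπ m cos φ} θ_m e^{−jπ m cos φ₀}`,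
and consequently the reflected power pattern satisfies `y_L(φ'; φ₁) = y_L(φ; φ₀)`:
changing the angle of arrival from `φ₀` to `φ₁` shifts the reflected pattern. -/
theorem stmt3 (M : ℕ) (hM : 0 < M) (NBS : ℕ) (θ : Fin M → ℂ)
    (φ φ' φ₀ φ₁ : ℝ)
    (hcos : Real.cos φ' = Real.cos φ + Real.cos φ₀ - Real.cos φ₁) :
    (∑ m : Fin M,
        Complex.exp (-(Real.pi * m * Real.cos φ' : ℝ) * Complex.I) * θ m *
          Complex.exp (-(Real.pi * m * Real.cos φ₁ : ℝ) * Complex.I)) =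
      (∑ m : Fin M,
        Complex.exp (-(Real.pi * m * Real.cos φ : ℝ) * Complex.I) * θ m *
          Complex.exp (-(Real.pi * m * Real.cos φ₀ : ℝ) * Complex.I)) ∧
    yL M NBS θ φ' φ₁ = yL M NBS θ φ φ₀ := by
  have key : ∀ m : Fin M,
      Complex.exp (-(Real.pi * m * Real.cos φ' : ℝ) * Complex.I) * θ m *
        Complex.exp (-(Real.pi * m * Real.cos φ₁ : ℝ) * Complex.I) =
      Complex.exp (-(Real.pi * m * Real.cos φ : ℝ) * Complex.I) * θ m *
        Complex.exp (-(Real.pi * m * Real.cos φ₀ : ℝ) * Complex.I) := by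
    intro m
    rw [mul_right_comm, mul_right_comm _ (θ m), ← Complex.exp_add, ← Complex.exp_add]
    congr 2
    rw [← add_mul, ← add_mul]
    norm_cast
    rw [hcos]; ring
  have hsum : (∑ m : Fin M,
        Complex.exp (-(Real.pi * m * Real.cos φ' : ℝ) * Complex.I) * θ m *
          Complex.exp (-(Real.pi * m * Real.cos φ₁ : ℝ) * Complex.I)) =
      (∑ m : Fin M,
        Complex.exp (-(Real.pi * m * Real.cos φ : ℝ) * Complex.I) * θ m *
          Complex.exp (-(Real.pi * m * Real.cos φ₀ : ℝ) * Complex.I)) :=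
    Finset.sum_congr rfl (fun m _ => key m)
  refine ⟨hsum, ?_⟩
  have h2 : ∀ (a b : ℝ) (m : Fin M),
      (starRingEnd ℂ) (aH M a m) * θ m * aG M b m =
      (1 / (Real.sqrt M : ℂ))^2 *
        (Complex.exp (-(Real.pi * m * Real.cos a : ℝ) * Complex.I) * θ m *
          Complex.exp (-(Real.pi * m * Real.cos b : ℝ) * Complex.I)) := by
    intro a b m
    simp only [aH, aG, map_mul, map_div₀, map_one, ← Complex.exp_conj,
      Complex.conj_ofReal, Complex.conj_I, mul_neg, neg_mul]
    ring
  have hS : (∑ m : Fin M, (starRingEnd ℂ) (aH M φ' m) * θ m * aG M φ₁ m)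
      = (∑ m : Fin M, (starRingEnd ℂ) (aH M φ m) * θ m * aG M φ₀ m) := by
    calc (∑ m : Fin M, (starRingEnd ℂ) (aH M φ' m) * θ m * aG M φ₁ m)
        = (1 / (Real.sqrt M : ℂ))^2 * ∑ m : Fin M,
            Complex.exp (-(Real.pi * m * Real.cos φ' : ℝ) * Complex.I) * θ m *
              Complex.exp (-(Real.pi * m * Real.cos φ₁ : ℝ) * Complex.I) := by
          rw [Finset.mul_sum]; exact Finset.sum_congr rfl (fun m _ => h2 φ' φ₁ m)
      _ = (1 / (Real.sqrt M : ℂ))^2 * ∑ m : Fin M,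
            Complex.exp (-(Real.pi * m * Real.cos φ : ℝ) * Complex.I) * θ m *
              Complex.exp (-(Real.pi * m * Real.cos φ₀ : ℝ) * Complex.I) := by rw [hsum]
      _ = (∑ m : Fin M, (starRingEnd ℂ) (aH M φ m) * θ m * aG M φ₀ m) := by
          rw [Finset.mul_sum]
          exact (Finset.sum_congr rfl (fun m _ => h2 φ φ₀ m)).symm
  unfold yL
  rw [hS]
end

section
/- Let M, N_BS, N_d, L be positive integers. Let A_G ∈ ℂ^{M×L} and B_G ∈ ℂ^{N_BS×L} be fixed matrices, D ∈ ℂ^{L×L} a fixed diagonal matrix whose diagonal entries all have unit modulus (the per-subcarrier delay phases), and, on a probability space, let α_0, …, α_{L−1} be complex random variables with E[α_i · conj(α_j)] = λ_i if i = j and 0 if i ≠ j, and set D_α = diagonal(α_0,…,α_{L−1}) and Λ = diagonal(λ_0,…,λ_{L−1}). Define the random channel G = √(N_BS M) · A_G D D_α B_G^H. Then for every a ∈ ℂ^M, every diagonal Θ ∈ ℂ^{M×M}, and every W ∈ ℂ^{N_BS×N_d}: M · E[ ‖ a^H Θ G W ‖₂² ] = M² N_BS · a^H Θ A_G ( I ∘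 (Λ B_G^H W W^H B_G) ) A_G^H Θ^H a. In particular, the average reflected power pattern does not depend on the unit-modulus diagonal matrix D, i.e., it is the same at every subcarrier. -/
/-!
Write `u = aᴴ Θ A_G` and `B = B_Gᴴ W`. The `d`-th entry of `aᴴ Θ G W` is
`√(N_BS M) ∑_l (u_l B_{ld}) (D_l α_l)`, a linear combination of the gains `D_l α_l`; these are
uncorrelated with the same powers `λ_l` as the `α_l`, because `|D_l| = 1`. Hence the cross terms
vanish in expectation and `E‖aᴴ Θ G W‖² = N_BS M ∑_l λ_l |u_l|² ∑_d |B_{ld}|²`, which is the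
quadratic form of `u` with the diagonal matrix `I ∘ (Λ B Bᴴ)`.
-/

open MeasureTheory Matrix Finset ComplexConjugate

lemma Complex.ofReal_normSq_sum_mul {ι : Type*} [Fintype ι] (c x : ι → ℂ) :
    (Complex.normSq (∑ i, c i * x i) : ℂ) =
      ∑ i, ∑ j, c i * conj (c j) * (x i * conj (x j)) := by
  rw [← Complex.mul_conj, map_sum, sum_mul_sum]
  refine sum_congr rfl fun i _ => sum_congr rfl fun j _ => ?_
  rw [map_mul]
  ring

section Uncorrelated

variable {ι Ω : Type*} [DecidableEq ι] [MeasurableSpace Ω]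

structure IsUncorrelated (μ : Measure Ω) (x : ι → Ω → ℂ) (lam : ι → ℝ) : Prop where
  integrable_mul_conj : ∀ i j, Integrable (fun ω => x i ω * conj (x j ω)) μ
  integral_mul_conj : ∀ i j, ∫ ω, x i ω * conj (x j ω) ∂μ = if i = j then (lam i : ℂ) else 0

namespace IsUncorrelated

variable {μ : Measure Ω} {x : ι → Ω → ℂ} {lam : ι → ℝ}

lemma const_mul_of_norm_eq_one (h : IsUncorrelated μ x lam) {D : ι → ℂ} (hD : ∀ i, ‖D i‖ = 1) :
    IsUncorrelated μ (fun i ω => D i * x i ω) lam := by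
  have hmul : ∀ i j ω,
      D i * x i ω * conj (D j * x j ω) = D i * conj (D j) * (x i ω * conj (x j ω)) :=
    fun i j ω => by rw [map_mul]; ring
  refine ⟨fun i j => ?_, fun i j => ?_⟩
  · simpa only [hmul] using (h.integrable_mul_conj i j).const_mul (D i * conj (D j))
  · simp only [hmul, integral_const_mul, h.integral_mul_conj, mul_ite, mul_zero]
    split_ifs with hij
    · rw [hij, Complex.mul_conj, Complex.normSq_eq_norm_sq, hD, one_pow, Complex.ofReal_one,
        one_mul]
    · rfl

variable [Fintype ι]

lemma integrable_normSq_sum_mul (h : IsUncorrelated μ x lam) (c : ι → ℂ) :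
    Integrable (fun ω => Complex.normSq (∑ i, c i * x i ω)) μ := by
  have hsum : Integrable (fun ω => ∑ i, ∑ j, c i * conj (c j) * (x i ω * conj (x j ω))) μ :=
    integrable_finsetSum _ fun i _ =>
      integrable_finsetSum _ fun j _ => (h.integrable_mul_conj i j).const_mul _
  refine hsum.re.congr (Filter.Eventually.of_forall fun ω => ?_)
  simp only [← Complex.ofReal_normSq_sum_mul, RCLike.re_to_complex, Complex.ofReal_re]

lemma integral_normSq_sum_mul (h : IsUncorrelated μ x lam) (c : ι → ℂ) :
    ∫ ω, Complex.normSq (∑ i, c i * x i ω) ∂μ = ∑ i, Complex.normSq (c i) * lam i := by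
  apply Complex.ofReal_injective
  refine (integral_ofReal (𝕜 := ℂ)).symm.trans ?_
  simp only [RCLike.ofReal_eq_complex_ofReal, Complex.ofReal_normSq_sum_mul, Complex.ofReal_sum,
    Complex.ofReal_mul]
  rw [integral_finsetSum _ fun i _ =>
    integrable_finsetSum _ fun j _ => (h.integrable_mul_conj i j).const_mul _]
  refine sum_congr rfl fun i _ => ?_
  rw [integral_finsetSum _ fun j _ => (h.integrable_mul_conj i j).const_mul _]
  simp only [integral_const_mul, h.integral_mul_conj, mul_ite, mul_zero, sum_ite_eq, mem_univ,
    if_true, Complex.mul_conj]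

end IsUncorrelated

end Uncorrelated

lemma vecMul_mul_diagonal_mul_apply {R k m n : Type*} [Semiring R] [Fintype k] [Fintype m]
    [DecidableEq m] (v : k → R) (P : Matrix k m R) (q : m → R) (B : Matrix m n R) (j : n) :
    (v ᵥ* (P * diagonal q * B)) j = ∑ l, (v ᵥ* P) l * q l * B l j := by
  rw [← vecMul_vecMul, ← vecMul_vecMul]
  exact sum_congr rfl fun l _ => by rw [vecMul_diagonal]

lemma integral_sum_normSq_vecMul_mul_diagonal_mul {ι Ω m n : Type*} [Fintype ι] [DecidableEq ι]
    [Fintype m] [Fintype n] [MeasurableSpace Ω] {μ : Measure Ω} {x : ι → Ω → ℂ} {lam : ι → ℝ}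
    (h : IsUncorrelated μ x lam) (v : m → ℂ) (P : Matrix m ι ℂ) (B : Matrix ι n ℂ) :
    ∫ ω, ∑ d, Complex.normSq ((v ᵥ* (P * diagonal (fun l => x l ω) * B)) d) ∂μ =
      ∑ l, lam l * Complex.normSq ((v ᵥ* P) l) * ∑ d, Complex.normSq (B l d) := by
  have hentry : ∀ ω d, (v ᵥ* (P * diagonal (fun l => x l ω) * B)) d =
      ∑ l, ((v ᵥ* P) l * B l d) * x l ω := fun ω d => by
    rw [vecMul_mul_diagonal_mul_apply]
    exact sum_congr rfl fun l _ => by ring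
  simp only [hentry]
  rw [integral_finsetSum _ fun d _ => h.integrable_normSq_sum_mul _]
  simp only [h.integral_normSq_sum_mul, Complex.normSq_mul, mul_sum]
  rw [sum_comm]
  exact sum_congr rfl fun l _ => sum_congr rfl fun d _ => by ring

lemma one_hadamard_diagonal_mul_mul_conjTranspose {ι n : Type*} [Fintype ι] [DecidableEq ι]
    [Fintype n] (lam : ι → ℂ) (B : Matrix ι n ℂ) :
    (1 : Matrix ι ι ℂ) ⊙ (diagonal lam * B * Bᴴ) =
      diagonal fun l => lam l * ∑ d, (Complex.normSq (B l d) : ℂ) := by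
  rw [← diagonal_one, diagonal_hadamard]
  congr 1
  ext l
  simp [mul_apply, diagonal_apply, mul_sum, ← Complex.mul_conj, mul_assoc]

lemma star_dotProduct_mul_diagonal_mul_conjTranspose_mulVec {ι m : Type*} [Fintype ι]
    [DecidableEq ι] [Fintype m] (v : m → ℂ) (P : Matrix m ι ℂ) (q : ι → ℂ) :
    star v ⬝ᵥ (P * diagonal q * Pᴴ) *ᵥ v = ∑ l, (Complex.normSq ((star v ᵥ* P) l) : ℂ) * q l := by
  have hstar : Pᴴ *ᵥ v = star (star v ᵥ* P) := by rw [star_vecMul, star_star]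
  rw [← mulVec_mulVec, ← mulVec_mulVec, hstar, dotProduct_mulVec, dotProduct]
  refine sum_congr rfl fun l _ => ?_
  rw [mulVec_diagonal, Pi.star_apply, Complex.star_def, ← Complex.mul_conj]
  ring

theorem stmt6_general
    {Ω : Type*} [MeasurableSpace Ω] (μ : Measure Ω)
    (M NBS Nd L : ℕ)
    (AG : Matrix (Fin M) (Fin L) ℂ) (BG : Matrix (Fin NBS) (Fin L) ℂ)
    (D : Fin L → ℂ) (hD : ∀ l, ‖D l‖ = 1)
    (α : Fin L → Ω → ℂ) (lam : Fin L → ℝ)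
    (hα : ∀ i j : Fin L,
      ∫ ω, α i ω * (starRingEnd ℂ) (α j ω) ∂μ = if i = j then (lam i : ℂ) else 0)
    (hαint : ∀ i j : Fin L,
      Integrable (fun ω => α i ω * (starRingEnd ℂ) (α j ω)) μ)
    (a : Fin M → ℂ) (Θ : Matrix (Fin M) (Fin M) ℂ)
    (W : Matrix (Fin NBS) (Fin Nd) ℂ) :
    (((M : ℝ) * ∫ ω, ∑ d : Fin Nd,
        Complex.normSq
          (Matrix.vecMul (star a)
            (Θ *
              ((Real.sqrt (NBS * M) : ℂ) •
                (AG * Matrix.diagonal D * Matrix.diagonal (fun l => α l ω) * BGᴴ)) *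
              W) d) ∂μ : ℝ) : ℂ) =
      (M : ℂ) ^ 2 * (NBS : ℂ) *
        (star a ⬝ᵥ
          (Θ * AG *
            Matrix.hadamard 1
              (Matrix.diagonal (fun l => (lam l : ℂ)) * BGᴴ * W * Wᴴ * BG) *
            AGᴴ * Θᴴ).mulVec a) := by
  set c : ℂ := (Real.sqrt (NBS * M) : ℂ)
  set B := BGᴴ * W
  have hgains : IsUncorrelated μ (fun l ω => D l * α l ω) lam :=
    (IsUncorrelated.mk hαint hα).const_mul_of_norm_eq_one hD
  have hchannel : ∀ ω, Θ * (c • (AG * diagonal D * diagonal (fun l => α l ω) * BGᴴ)) * W =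
      c • (Θ * AG * diagonal (fun l => D l * α l ω) * B) := fun ω => by
    rw [← diagonal_mul_diagonal]
    simp only [Matrix.mul_smul, Matrix.smul_mul, Matrix.mul_assoc, B]
  have hc : Complex.normSq c = NBS * M := by
    rw [Complex.normSq_ofReal, Real.mul_self_sqrt (by positivity)]
  have hpower : ∫ ω, ∑ d, Complex.normSq
        ((star a ᵥ* (Θ * (c • (AG * diagonal D * diagonal (fun l => α l ω) * BGᴴ)) * W)) d) ∂μ =
      NBS * M * ∑ l, lam l * Complex.normSq ((star a ᵥ* (Θ * AG)) l) *
        ∑ d, Complex.normSq (B l d) := by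
    simp only [hchannel, vecMul_smul, Pi.smul_apply, smul_eq_mul, Complex.normSq_mul, ← mul_sum,
      integral_const_mul, hc, integral_sum_normSq_vecMul_mul_diagonal_mul hgains]
  have hpattern : Θ * AG * (1 ⊙ (diagonal (fun l => (lam l : ℂ)) * BGᴴ * W * Wᴴ * BG)) * AGᴴ * Θᴴ =
      Θ * AG * diagonal (fun l => lam l * ∑ d, (Complex.normSq (B l d) : ℂ)) * (Θ * AG)ᴴ := by
    have hBB : diagonal (fun l => (lam l : ℂ)) * BGᴴ * W * Wᴴ * BG =
        diagonal (fun l => (lam l : ℂ)) * B * Bᴴ := by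
      simp only [B, conjTranspose_mul, conjTranspose_conjTranspose, Matrix.mul_assoc]
    rw [hBB, one_hadamard_diagonal_mul_mul_conjTranspose, conjTranspose_mul]
    simp only [Matrix.mul_assoc]
  rw [hpower, hpattern, star_dotProduct_mul_diagonal_mul_conjTranspose_mulVec]
  push_cast
  rw [mul_sum, mul_sum, mul_sum]
  exact sum_congr rfl fun l _ => by ring

/-- With the random mmWave BS–RIS channel
`G = √(N_BS M) · A_G D D_α B_Gᴴ`, where `D` is a unit-modulus diagonal (delay-phase)
matrix and `D_α` carries uncorrelated path gains with average powers `λ_l`, the average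
reflected power satisfies, for every `a`, every diagonal `Θ`, and every `W`:
`M E‖aᴴ Θ G W‖₂² = M² N_BS · aᴴ Θ A_G (I ∘ (Λ B_Gᴴ W Wᴴ B_G)) A_Gᴴ Θᴴ a`;
in particular it does not depend on `D`, i.e. it is the same at every subcarrier. -/
theorem stmt6
    {Ω : Type*} [MeasurableSpace Ω] (μ : Measure Ω) [IsProbabilityMeasure μ]
    (M NBS Nd L : ℕ) (hM : 0 < M) (hNBS : 0 < NBS) (hNd : 0 < Nd) (hL : 0 < L)
    (AG : Matrix (Fin M) (Fin L) ℂ) (BG : Matrix (Fin NBS) (Fin L) ℂ)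
    (D : Fin L → ℂ) (hD : ∀ l, ‖D l‖ = 1)
    (α : Fin L → Ω → ℂ) (lam : Fin L → ℝ)
    (hα : ∀ i j : Fin L,
      ∫ ω, α i ω * (starRingEnd ℂ) (α j ω) ∂μ = if i = j then (lam i : ℂ) else 0)
    (hαint : ∀ i j : Fin L,
      Integrable (fun ω => α i ω * (starRingEnd ℂ) (α j ω)) μ)
    (a : Fin M → ℂ) (Θ : Matrix (Fin M) (Fin M) ℂ) (hΘ : Θ.IsDiag)
    (W : Matrix (Fin NBS) (Fin Nd) ℂ) :
    (((M : ℝ) * ∫ ω, ∑ d : Fin Nd,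
        Complex.normSq
          (Matrix.vecMul (star a)
            (Θ *
              ((Real.sqrt (NBS * M) : ℂ) •
                (AG * Matrix.diagonal D * Matrix.diagonal (fun l => α l ω) * BGᴴ)) *
              W) d) ∂μ : ℝ) : ℂ) =
      (M : ℂ) ^ 2 * (NBS : ℂ) *
        (star a ⬝ᵥ
          (Θ * AG *
            Matrix.hadamard 1
              (Matrix.diagonal (fun l => (lam l : ℂ)) * BGᴴ * W * Wᴴ * BG) *
            AGᴴ * Θᴴ).mulVec a) :=
  stmt6_general μ M NBS Nd L AG BG D hD α lam hα hαint a Θ W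
end
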